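/- For every complex number q with |q| < 1, the following identity holds: Σ_{n≥0} (q; q)_{2n} q^{2n} / (q^4; q^4)_n = 1/(1+q) + ((q; q)_∞/(q^4; q^4)_∞) · Σ_{m≥0} q^{2m+1} (−q^2; q^2)_m / (q; q^2)_{m+1}. -/

import Mathlib

/-- The finite q-Pochhammer symbol `(a; q)_n = ∏_{j=0}^{n-1} (1 - a q^j)`. -/
noncomputable def qPoch (a q : ℂ) (n : ℕ) : ℂ := ∏ j ∈ Finset.range n, (1 - a * q ^ j)

/-- The infinite q-Pochhammer symbol `(a; q)_∞ = ∏_{j=0}^{∞} (1 - a q^j)`. -/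
noncomputable def qPochInf (a q : ℂ) : ℂ := ∏' j : ℕ, (1 - a * q ^ j)

/-
Put ρₙ = (q; q²)ₙ / (−q²; q²)ₙ. Splitting (q; q)₂ₙ into its odd and even factors and
(q⁴; q⁴)ₙ = (q²; q²)ₙ (−q²; q²)ₙ shows ρₙ = (q; q)₂ₙ / (q⁴; q⁴)ₙ, so ρₙ tends to
ρ = (q; q)_∞ / (q⁴; q⁴)_∞. After multiplication by 1 + q both series telescope: the n-th term
on the left becomes ρₙ (1 + q²ⁿ) − ρₙ₊₁ (1 + q²ⁿ⁺²), and the m-th term on the right becomes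
1/ρₘ₊₁ − 1/ρₘ. Hence (1 + q) times the left side is 2 − ρ and (1 + q) times the right-hand
series is 1/ρ − 1, which is the identity.
-/

open Filter Topology

lemma norm_pow_lt_one {R : Type*} [SeminormedRing R] {z : R} (hz : ‖z‖ < 1) {n : ℕ}
    (hn : n ≠ 0) : ‖z ^ n‖ < 1 :=
  (norm_pow_le' z (Nat.pos_of_ne_zero hn)).trans_lt (pow_lt_one₀ (norm_nonneg z) hz hn)

lemma summable_pow_mul_of_tendsto {R : Type*} [NormedRing R] [NormMulClass R] [NormOneClass R]
    [CompleteSpace R] {z L : R} {f : ℕ → R} (hz : ‖z‖ < 1)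
    (hf : Tendsto f atTop (𝓝 L)) : Summable fun n => z ^ n * f n :=
  (summable_norm_geometric_of_norm_lt_one hz).mul_tendsto_const (Nat.cofinite_eq_atTop ▸ hf)

lemma tsum_eq_sub_of_tendsto {E : Type*} [AddCommGroup E] [TopologicalSpace E]
    [IsTopologicalAddGroup E] [T2Space E] {f u : ℕ → E} {L : E} (hf : Summable f)
    (hfu : ∀ n, f n = u n - u (n + 1)) (hu : Tendsto u atTop (𝓝 L)) : ∑' n, f n = u 0 - L := by
  refine (hf.hasSum_iff_tendsto_nat.2 ?_).tsum_eq
  simpa only [hfu, Finset.sum_range_sub'] using tendsto_const_nhds.sub hu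

lemma qPoch_succ (a q : ℂ) (n : ℕ) : qPoch a q (n + 1) = qPoch a q n * (1 - a * q ^ n) :=
  Finset.prod_range_succ _ _

lemma qPoch_two_mul (a q : ℂ) (n : ℕ) :
    qPoch a q (2 * n) = qPoch a (q ^ 2) n * qPoch (a * q) (q ^ 2) n := by
  induction n with
  | zero => simp [qPoch]
  | succ n ih =>
    rw [show 2 * (n + 1) = 2 * n + 1 + 1 by ring, qPoch_succ, qPoch_succ, qPoch_succ, qPoch_succ,
      ih]
    ring

lemma qPoch_sq_sq (a q : ℂ) (n : ℕ) : qPoch (a ^ 2) (q ^ 2) n = qPoch a q n * qPoch (-a) q n := by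
  simp only [qPoch, ← Finset.prod_mul_distrib]
  exact Finset.prod_congr rfl fun j _ => by ring

lemma one_sub_mul_pow_ne_zero {a q : ℂ} (ha : ‖a‖ < 1) (hq : ‖q‖ ≤ 1) (j : ℕ) :
    1 - a * q ^ j ≠ 0 := by
  have h : ‖a * q ^ j‖ < 1 := by
    rw [norm_mul, norm_pow]
    exact mul_lt_one_of_nonneg_of_lt_one_left (norm_nonneg a) ha (pow_le_one₀ (norm_nonneg q) hq)
  exact sub_ne_zero.2 fun h1 => by simp [← h1] at h

lemma qPoch_ne_zero {a q : ℂ} (ha : ‖a‖ < 1) (hq : ‖q‖ ≤ 1) (n : ℕ) : qPoch a q n ≠ 0 :=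
  Finset.prod_ne_zero_iff.2 fun j _ => one_sub_mul_pow_ne_zero ha hq j

lemma summable_norm_mul_pow (a : ℂ) {q : ℂ} (hq : ‖q‖ < 1) :
    Summable fun j : ℕ => ‖-(a * q ^ j)‖ := by
  simpa [norm_mul, norm_pow] using (summable_geometric_of_lt_one (norm_nonneg q) hq).mul_left ‖a‖

lemma tendsto_qPoch_qPochInf (a : ℂ) {q : ℂ} (hq : ‖q‖ < 1) :
    Tendsto (qPoch a q) atTop (𝓝 (qPochInf a q)) := by
  have h := (multipliable_one_add_of_summable (summable_norm_mul_pow a hq)).hasProd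
  simp only [← sub_eq_add_neg] at h
  exact h.tendsto_prod_nat

lemma qPochInf_ne_zero {a q : ℂ} (ha : ‖a‖ < 1) (hq : ‖q‖ < 1) : qPochInf a q ≠ 0 := by
  have h := tprod_one_add_ne_zero_of_summable
    (fun j => by simpa [← sub_eq_add_neg] using one_sub_mul_pow_ne_zero ha hq.le j)
    (summable_norm_mul_pow a hq)
  simp only [← sub_eq_add_neg] at h
  exact h

noncomputable def qPochRatio (q : ℂ) (n : ℕ) : ℂ := qPoch q (q ^ 2) n / qPoch (-q ^ 2) (q ^ 2) n

lemma qPochRatio_zero (q : ℂ) : qPochRatio q 0 = 1 := by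
  simp [qPochRatio, qPoch]

section Ratio

variable {q : ℂ} (hq : ‖q‖ < 1)
include hq

lemma qPoch_two_mul_div_qPoch_four (n : ℕ) :
    qPoch q q (2 * n) / qPoch (q ^ 4) (q ^ 4) n = qPochRatio q n := by
  have hq2 := norm_pow_lt_one hq two_ne_zero
  rw [qPoch_two_mul, show q ^ 4 = (q ^ 2) ^ 2 by ring, qPoch_sq_sq, ← sq, qPochRatio,
    mul_comm (qPoch (q ^ 2) (q ^ 2) n), mul_div_mul_right _ _ (qPoch_ne_zero hq2 hq2.le n)]

lemma tendsto_qPochRatio :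
    Tendsto (qPochRatio q) atTop (𝓝 (qPochInf q q / qPochInf (q ^ 4) (q ^ 4))) := by
  have hq4 := norm_pow_lt_one hq four_ne_zero
  have hdouble : Tendsto (fun n : ℕ => 2 * n) atTop atTop :=
    tendsto_id.const_mul_atTop' two_pos
  exact (((tendsto_qPoch_qPochInf q hq).comp hdouble).div (tendsto_qPoch_qPochInf _ hq4)
    (qPochInf_ne_zero hq4 hq4)).congr (qPoch_two_mul_div_qPoch_four hq)

lemma qPochRatio_succ_mul (n : ℕ) :
    qPochRatio q (n + 1) * (1 + q ^ (2 * n + 2)) = qPochRatio q n * (1 - q ^ (2 * n + 1)) := by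
  have hq2 := norm_pow_lt_one hq two_ne_zero
  have hfactor := one_sub_mul_pow_ne_zero (by rwa [norm_neg]) hq2.le n
  have hpoch := qPoch_ne_zero (a := -q ^ 2) (by rwa [norm_neg]) hq2.le n
  have hsucc : 1 - -q ^ 2 * (q ^ 2) ^ n = 1 + q ^ (2 * n + 2) := by ring
  rw [hsucc] at hfactor
  rw [qPochRatio, qPochRatio, qPoch_succ, qPoch_succ, hsucc]
  field_simp
  ring

lemma one_add_mul_qPoch_two_mul_div_eq_sub (n : ℕ) :
    (1 + q) * (qPoch q q (2 * n) * q ^ (2 * n) / qPoch (q ^ 4) (q ^ 4) n) =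
      qPochRatio q n * (1 + q ^ (2 * n)) - qPochRatio q (n + 1) * (1 + q ^ (2 * (n + 1))) := by
  rw [mul_div_right_comm, qPoch_two_mul_div_qPoch_four hq, mul_add 2 n 1,
    qPochRatio_succ_mul hq]
  ring

lemma one_add_mul_pow_mul_qPoch_div_eq_sub (m : ℕ) :
    (1 + q) * (q ^ (2 * m + 1) * qPoch (-q ^ 2) (q ^ 2) m / qPoch q (q ^ 2) (m + 1)) =
      (qPochRatio q (m + 1))⁻¹ - (qPochRatio q m)⁻¹ := by
  have hq2 := norm_pow_lt_one hq two_ne_zero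
  have hfactor := one_sub_mul_pow_ne_zero hq hq2.le m
  have hpoch := qPoch_ne_zero hq hq2.le m
  have hsucc : q * (q ^ 2) ^ m = q ^ (2 * m + 1) := by ring
  rw [hsucc] at hfactor
  rw [qPochRatio, qPochRatio, inv_div, inv_div, qPoch_succ, qPoch_succ, hsucc]
  field_simp
  ring

lemma summable_qPoch_two_mul_div :
    Summable fun n : ℕ => qPoch q q (2 * n) * q ^ (2 * n) / qPoch (q ^ 4) (q ^ 4) n :=
  (summable_pow_mul_of_tendsto (norm_pow_lt_one hq two_ne_zero) (tendsto_qPochRatio hq)).congr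
    fun n => by rw [mul_div_right_comm, qPoch_two_mul_div_qPoch_four hq, pow_mul, mul_comm]

lemma summable_pow_mul_qPoch_div :
    Summable fun m : ℕ => q ^ (2 * m + 1) * qPoch (-q ^ 2) (q ^ 2) m / qPoch q (q ^ 2) (m + 1) := by
  have hq2 := norm_pow_lt_one hq two_ne_zero
  have hlim := ((tendsto_qPoch_qPochInf (-q ^ 2) hq2).const_mul q).div
    ((tendsto_qPoch_qPochInf q hq2).comp (tendsto_add_atTop_nat 1)) (qPochInf_ne_zero hq hq2)
  exact (summable_pow_mul_of_tendsto hq2 hlim).congr fun m => by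
    simp only [Pi.div_apply, Function.comp_apply]
    ring

lemma one_add_mul_tsum_qPoch_two_mul_div :
    (1 + q) * ∑' n : ℕ, qPoch q q (2 * n) * q ^ (2 * n) / qPoch (q ^ 4) (q ^ 4) n =
      2 - qPochInf q q / qPochInf (q ^ 4) (q ^ 4) := by
  have hpow : Tendsto (fun n : ℕ => q ^ (2 * n)) atTop (𝓝 0) := by
    simpa only [pow_mul] using
      tendsto_pow_atTop_nhds_zero_of_norm_lt_one (norm_pow_lt_one hq two_ne_zero)
  rw [← tsum_mul_left, tsum_eq_sub_of_tendsto ((summable_qPoch_two_mul_div hq).mul_left _)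
    (one_add_mul_qPoch_two_mul_div_eq_sub hq)
    ((tendsto_qPochRatio hq).mul (tendsto_const_nhds.add hpow)), qPochRatio_zero, mul_zero,
    pow_zero]
  ring

lemma one_add_mul_tsum_pow_mul_qPoch_div :
    (1 + q) * ∑' m : ℕ, q ^ (2 * m + 1) * qPoch (-q ^ 2) (q ^ 2) m / qPoch q (q ^ 2) (m + 1) =
      (qPochInf q q / qPochInf (q ^ 4) (q ^ 4))⁻¹ - 1 := by
  have hq4 := norm_pow_lt_one hq four_ne_zero
  have hlim := ((tendsto_qPochRatio hq).inv₀
    (div_ne_zero (qPochInf_ne_zero hq hq) (qPochInf_ne_zero hq4 hq4))).neg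
  rw [← tsum_mul_left, tsum_eq_sub_of_tendsto ((summable_pow_mul_qPoch_div hq).mul_left _)
    (fun m => by rw [one_add_mul_pow_mul_qPoch_div_eq_sub hq]; ring) hlim, qPochRatio_zero]
  ring

end Ratio

theorem stmt_13 (q : ℂ) (hq : ‖q‖ < 1) :
    ∑' n : ℕ, qPoch q q (2 * n) * q ^ (2 * n) / qPoch (q ^ 4) (q ^ 4) n =
      1 / (1 + q) + (qPochInf q q / qPochInf (q ^ 4) (q ^ 4)) *
        ∑' m : ℕ, q ^ (2 * m + 1) * qPoch (-q ^ 2) (q ^ 2) m / qPoch q (q ^ 2) (m + 1) := by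
  have hq4 := norm_pow_lt_one hq four_ne_zero
  have hnum := qPochInf_ne_zero hq hq
  have hden := qPochInf_ne_zero hq4 hq4
  have h1q : 1 + q ≠ 0 := fun h => by simp [eq_neg_of_add_eq_zero_right h] at hq
  apply mul_left_cancel₀ h1q
  rw [one_add_mul_tsum_qPoch_two_mul_div hq, mul_add, mul_left_comm,
    one_add_mul_tsum_pow_mul_qPoch_div hq]
  field_simp
  ring
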